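/- Let η ∈ {0,1}^ℕ. For every k, ℓ ∈ ℕ, σ ∈ {↑,↓} and x ∈ ℕ, the ℓ-th seat indicator of the k-skipped configuration equals the (k+ℓ)-th seat indicator of the original configuration at the skipped position: Ψ_k(η)^σ_ℓ(x) = η^σ_{k+ℓ}(s_k(η,x)). In particular, r(Ψ_k(η),x) = r(η, s_k(η,x)). -/

import Mathlib

/-- Seat occupation functions 𝒲_k(η,x). -/
def seatW (η : ℕ → ℤ) : ℕ → ℕ → ℤ
  | 0, _ => 0
  | x + 1, k =>
      seatW η x k
        + η (x + 1) * (1 - seatW η x k) * (∏ m ∈ Finset.Ico 1 k, seatW η x m)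
        - (1 - η (x + 1)) * seatW η x k * (∏ m ∈ Finset.Ico 1 k, (1 - seatW η x m))

/-- Boarding indicator η↑_k(x). -/
def seatUp (η : ℕ → ℤ) (k x : ℕ) : ℤ :=
  η x * (1 - seatW η (x - 1) k) * (∏ m ∈ Finset.Ico 1 k, seatW η (x - 1) m)

/-- Alighting indicator η↓_k(x). -/
def seatDown (η : ℕ → ℤ) (k x : ℕ) : ℤ :=
  (1 - η x) * seatW η (x - 1) k * (∏ m ∈ Finset.Ico 1 k, (1 - seatW η (x - 1) m))

/-- Record indicator r(η,x). (Seat events at x have seat number ≤ x.) -/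
def recordInd (η : ℕ → ℤ) (x : ℕ) : ℤ :=
  1 - ∑ k ∈ Finset.Icc 1 x, (seatUp η k x + seatDown η k x)

/-- ξ_k(η,x). -/
def xiSeat (η : ℕ → ℤ) (k x : ℕ) : ℤ :=
  (x : ℤ) - ∑ y ∈ Finset.Icc 1 x, ∑ m ∈ Finset.Icc 1 k, (seatUp η m y + seatDown η m y)

/-- s_k(η,i). -/
noncomputable def sSeat (η : ℕ → ℤ) (k i : ℕ) : ℕ :=
  sInf {x : ℕ | xiSeat η k x = (i : ℤ)}

/-- k-skip map Ψ_k. -/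
noncomputable def skip (η : ℕ → ℤ) (k : ℕ) : ℕ → ℤ := fun x => η (sSeat η k x)

/-- Slot decomposition ζ_k(η,i). -/
noncomputable def zeta (η : ℕ → ℤ) (k i : ℕ) : ℤ :=
  ∑ y ∈ Finset.Icc (sSeat η k i + 1) (sSeat η k (i + 1)),
    (seatUp η k y - seatUp η (k + 1) y)

/-- Carrier with capacity ℓ. -/
def carrier (η : ℕ → ℤ) (ℓ : ℕ) : ℕ → ℤ
  | 0 => 0
  | x + 1 =>
      if η (x + 1) = 1 ∧ carrier η ℓ x < (ℓ : ℤ) then carrier η ℓ x + 1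
      else if η (x + 1) = 0 ∧ 0 < carrier η ℓ x then carrier η ℓ x - 1
      else carrier η ℓ x

/-- Carrier with infinite capacity. -/
def carrierInf (η : ℕ → ℤ) : ℕ → ℤ
  | 0 => 0
  | x + 1 => if η (x + 1) = 1 then carrierInf η x + 1 else max (carrierInf η x - 1) 0

/-- One-step BBS(ℓ) evolution. -/
def tEvol (η : ℕ → ℤ) (ℓ : ℕ) : ℕ → ℤ :=
  fun x => η x + carrier η ℓ (x - 1) - carrier η ℓ x

/-- One-step BBS(∞) evolution. -/
def tEvolInf (η : ℕ → ℤ) : ℕ → ℤ :=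
  fun x => η x + carrierInf η (x - 1) - carrierInf η x

/-!
A site `y` is kept by `Ψ_k` exactly when `ξ_k` increases at `y`, i.e. when no seat `≤ k` is
involved there. Then seats `1, …, k` are all occupied (if `η y = 1`) or all empty (if `η y = 0`),
so the ball boards, or the lowest occupied seat is vacated, among the seats above `k` exactly as
in a system whose first `k` seats have been removed. At the discarded sites only seats `≤ k`
change. By induction on `x`, the occupation of seat `j` after `x` sites of `Ψ_k η` is that of
seat `k + j` after `s_k(η, x)` sites of `η`, and the seat events at `x` shift in the same way.
-/

open Finset

theorem Finset.prod_eq_zero_or_one {ι M : Type*} [CommMonoidWithZero M] {s : Finset ι}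
    {f : ι → M} (h : ∀ i ∈ s, f i = 0 ∨ f i = 1) : ∏ i ∈ s, f i = 0 ∨ ∏ i ∈ s, f i = 1 := by
  by_cases h0 : ∃ i ∈ s, f i = 0
  · obtain ⟨i, hi, h0⟩ := h0
    exact Or.inl (prod_eq_zero hi h0)
  · push Not at h0
    exact Or.inr (prod_eq_one fun i hi => (h i hi).resolve_left (h0 i hi))

@[to_additive Finset.sum_Icc_one_add]
theorem Finset.prod_Icc_one_add {M : Type*} [CommMonoid M] (f : ℕ → M) (k n : ℕ) :
    ∏ i ∈ Icc 1 (k + n), f i = (∏ i ∈ Icc 1 k, f i) * ∏ i ∈ Icc 1 n, f (k + i) := by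
  rw [← Ico_add_one_right_eq_Icc, ← Ico_add_one_right_eq_Icc, ← Ico_add_one_right_eq_Icc,
    prod_Ico_add, ← prod_Ico_consecutive _ (by omega : 1 ≤ k + 1) (by omega : k + 1 ≤ k + n + 1),
    add_comm 1 k, add_right_comm n, add_comm n]

theorem Finset.sum_one_sub_mul_prod_Ico {R : Type*} [CommRing R] (g : ℕ → R) (k : ℕ) :
    ∑ m ∈ Icc 1 k, (1 - g m) * ∏ i ∈ Ico 1 m, g i = 1 - ∏ i ∈ Icc 1 k, g i := by
  have h := prod_one_sub_ordered (Icc 1 k) (fun i => 1 - g i)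
  simp only [sub_sub_cancel] at h
  rw [h, sub_sub_cancel]
  refine sum_congr rfl fun m hm => ?_
  congr 2
  ext i
  simp only [mem_filter, mem_Icc, mem_Ico] at hm ⊢
  grind

theorem seatW_succ (η : ℕ → ℤ) (x k : ℕ) :
    seatW η (x + 1) k = seatW η x k + seatUp η k (x + 1) - seatDown η k (x + 1) := by
  simp only [seatW, seatUp, seatDown, Nat.add_sub_cancel]

theorem seatW_zero_or_one {η : ℕ → ℤ} (hη : ∀ x, η x = 0 ∨ η x = 1) :
    ∀ x k, seatW η x k = 0 ∨ seatW η x k = 1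
  | 0, _ => Or.inl rfl
  | x + 1, k => by
    have ih := seatW_zero_or_one hη x
    have hP := prod_eq_zero_or_one fun m (_ : m ∈ Ico 1 k) => ih m
    have hQ := prod_eq_zero_or_one fun m (_ : m ∈ Ico 1 k) =>
      show 1 - seatW η x m = 0 ∨ 1 - seatW η x m = 1 by have := ih m; omega
    rw [seatW]
    rcases hη (x + 1) with h | h <;> rcases ih k with hw | hw <;> rcases hP with hP | hP <;>
      rcases hQ with hQ | hQ <;> simp [h, hw, hP, hQ]

theorem seatW_eq_zero_of_lt (η : ℕ → ℤ) : ∀ {x k : ℕ}, x < k → seatW η x k = 0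
  | 0, _, _ => rfl
  | x + 1, k, h => by
    have hP : ∏ m ∈ Ico 1 k, seatW η x m = 0 :=
      prod_eq_zero (mem_Ico.mpr ⟨by omega, h⟩) (seatW_eq_zero_of_lt η (Nat.lt_succ_self x))
    rw [seatW, seatW_eq_zero_of_lt η (by omega : x < k), hP]
    ring

theorem seatUp_eq_zero_of_lt (η : ℕ → ℤ) {y m : ℕ} (hy : 1 ≤ y) (h : y < m) :
    seatUp η m y = 0 := by
  rw [seatUp, prod_eq_zero (mem_Ico.mpr ⟨hy, h⟩) (seatW_eq_zero_of_lt η (by omega)), mul_zero]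

theorem seatDown_eq_zero_of_lt (η : ℕ → ℤ) {y m : ℕ} (h : y < m) : seatDown η m y = 0 := by
  rw [seatDown, seatW_eq_zero_of_lt η (by omega), mul_zero, zero_mul]

-- Takes the value `1` when the seat event at `y` involves a seat `≤ k`, and `0` otherwise.
def lowSeatEvent (η : ℕ → ℤ) (k y : ℕ) : ℤ :=
  ∑ m ∈ Icc 1 k, (seatUp η m y + seatDown η m y)

theorem recordInd_eq_one_sub_lowSeatEvent (η : ℕ → ℤ) {x N : ℕ} (hx : 1 ≤ x) (hN : x ≤ N) :
    recordInd η x = 1 - lowSeatEvent η N x := by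
  rw [recordInd, lowSeatEvent, sum_subset (Icc_subset_Icc_right hN)]
  intro m hm hmx
  simp only [mem_Icc, not_and, not_le] at hm hmx
  rw [seatUp_eq_zero_of_lt η hx (hmx hm.1), seatDown_eq_zero_of_lt η (hmx hm.1), add_zero]

theorem lowSeatEvent_add (η : ℕ → ℤ) (k n y : ℕ) :
    lowSeatEvent η (k + n) y =
      lowSeatEvent η k y + ∑ m ∈ Icc 1 n, (seatUp η (k + m) y + seatDown η (k + m) y) :=
  sum_Icc_one_add _ k n

theorem lowSeatEvent_eq (η : ℕ → ℤ) (k y : ℕ) :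
    lowSeatEvent η k y = η y * (1 - ∏ m ∈ Icc 1 k, seatW η (y - 1) m)
      + (1 - η y) * (1 - ∏ m ∈ Icc 1 k, (1 - seatW η (y - 1) m)) := by
  rw [← sum_one_sub_mul_prod_Ico, ← sum_one_sub_mul_prod_Ico, mul_sum, mul_sum, ← sum_add_distrib,
    lowSeatEvent]
  refine sum_congr rfl fun m _ => ?_
  rw [seatUp, seatDown]
  ring

theorem lowSeatEvent_le_one {η : ℕ → ℤ} (hη : ∀ x, η x = 0 ∨ η x = 1) (k y : ℕ) :
    lowSeatEvent η k y ≤ 1 := by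
  have hW := seatW_zero_or_one hη (y - 1)
  have hP := prod_eq_zero_or_one fun m (_ : m ∈ Icc 1 k) => hW m
  have hQ := prod_eq_zero_or_one fun m (_ : m ∈ Icc 1 k) =>
    show 1 - seatW η (y - 1) m = 0 ∨ 1 - seatW η (y - 1) m = 1 by have := hW m; omega
  rw [lowSeatEvent_eq]
  rcases hη y with h | h <;> rcases hP with hP | hP <;> rcases hQ with hQ | hQ <;>
    simp [h, hP, hQ]

theorem xiSeat_succ (η : ℕ → ℤ) (k x : ℕ) :
    xiSeat η k (x + 1) = xiSeat η k x + 1 - lowSeatEvent η k (x + 1) := by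
  rw [xiSeat, xiSeat, sum_Icc_succ_top (by omega), lowSeatEvent]
  push_cast
  ring

theorem xiSeat_monotone {η : ℕ → ℤ} (hη : ∀ x, η x = 0 ∨ η x = 1) (k : ℕ) : Monotone (xiSeat η k) :=
  monotone_nat_of_le_succ fun x => by
    rw [xiSeat_succ]
    linarith [lowSeatEvent_le_one hη k (x + 1)]

theorem seatUp_add (η : ℕ → ℤ) (k : ℕ) {j : ℕ} (hj : 1 ≤ j) (y : ℕ) :
    seatUp η (k + j) y = (∏ m ∈ Icc 1 k, seatW η (y - 1) m) *
      (η y * (1 - seatW η (y - 1) (k + j)) * ∏ i ∈ Ico 1 j, seatW η (y - 1) (k + i)) := by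
  obtain ⟨n, rfl⟩ : ∃ n, j = n + 1 := ⟨j - 1, by omega⟩
  rw [seatUp, ← add_assoc, Ico_add_one_right_eq_Icc, Ico_add_one_right_eq_Icc, prod_Icc_one_add]
  ring

theorem seatDown_add (η : ℕ → ℤ) (k : ℕ) {j : ℕ} (hj : 1 ≤ j) (y : ℕ) :
    seatDown η (k + j) y = (∏ m ∈ Icc 1 k, (1 - seatW η (y - 1) m)) *
      ((1 - η y) * seatW η (y - 1) (k + j) * ∏ i ∈ Ico 1 j, (1 - seatW η (y - 1) (k + i))) := by
  obtain ⟨n, rfl⟩ : ∃ n, j = n + 1 := ⟨j - 1, by omega⟩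
  rw [seatDown, ← add_assoc, Ico_add_one_right_eq_Icc, Ico_add_one_right_eq_Icc,
    prod_Icc_one_add (fun m => 1 - seatW η (y - 1) m)]
  ring

section LowSeatEvent

variable {η : ℕ → ℤ} {k y j : ℕ} (hy : η y = 0 ∨ η y = 1)
include hy

theorem seatUp_add_of_lowSeatEvent_eq_zero (hE : lowSeatEvent η k y = 0) (hj : 1 ≤ j) :
    seatUp η (k + j) y =
      η y * (1 - seatW η (y - 1) (k + j)) * ∏ i ∈ Ico 1 j, seatW η (y - 1) (k + i) := by
  rw [lowSeatEvent_eq] at hE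
  rw [seatUp_add η k hj]
  rcases hy with h | h <;> rw [h] at hE ⊢
  · ring
  · rw [show ∏ m ∈ Icc 1 k, seatW η (y - 1) m = 1 by linear_combination -hE, one_mul]

theorem seatDown_add_of_lowSeatEvent_eq_zero (hE : lowSeatEvent η k y = 0) (hj : 1 ≤ j) :
    seatDown η (k + j) y =
      (1 - η y) * seatW η (y - 1) (k + j) * ∏ i ∈ Ico 1 j, (1 - seatW η (y - 1) (k + i)) := by
  rw [lowSeatEvent_eq] at hE
  rw [seatDown_add η k hj]
  rcases hy with h | h <;> rw [h] at hE ⊢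
  · rw [show ∏ m ∈ Icc 1 k, (1 - seatW η (y - 1) m) = 1 by linear_combination -hE, one_mul]
  · ring

theorem seatUp_add_of_lowSeatEvent_eq_one (hE : lowSeatEvent η k y = 1) (hj : 1 ≤ j) :
    seatUp η (k + j) y = 0 := by
  rw [lowSeatEvent_eq] at hE
  rw [seatUp_add η k hj]
  rcases hy with h | h <;> rw [h] at hE ⊢
  · ring
  · rw [show ∏ m ∈ Icc 1 k, seatW η (y - 1) m = 0 by linear_combination -hE, zero_mul]

theorem seatDown_add_of_lowSeatEvent_eq_one (hE : lowSeatEvent η k y = 1) (hj : 1 ≤ j) :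
    seatDown η (k + j) y = 0 := by
  rw [lowSeatEvent_eq] at hE
  rw [seatDown_add η k hj]
  rcases hy with h | h <;> rw [h] at hE ⊢
  · rw [show ∏ m ∈ Icc 1 k, (1 - seatW η (y - 1) m) = 0 by linear_combination -hE, zero_mul]
  · ring

end LowSeatEvent

theorem seatW_add_of_lowSeatEvent_eq_one {η : ℕ → ℤ} {k y j : ℕ}
    (hy : η (y + 1) = 0 ∨ η (y + 1) = 1) (hE : lowSeatEvent η k (y + 1) = 1) (hj : 1 ≤ j) :
    seatW η (y + 1) (k + j) = seatW η y (k + j) := by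
  rw [seatW_succ, seatUp_add_of_lowSeatEvent_eq_one hy hE hj,
    seatDown_add_of_lowSeatEvent_eq_one hy hE hj]
  ring

section FirstHittingTime

variable {f : ℕ → ℤ} {i : ℤ} (hf : Monotone f) (hi : ∃ x, f x = i) (hi' : ∃ x, f x = i + 1)
include hf hi hi'

theorem Monotone.sInf_lt_sInf_succ : sInf {x | f x = i} < sInf {x | f x = i + 1} := by
  by_contra! h
  have hfirst : f (sInf {x | f x = i}) = i := Nat.sInf_mem hi
  have hnext : f (sInf {x | f x = i + 1}) = i + 1 := Nat.sInf_mem hi'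
  linarith [hf h]

theorem Monotone.eq_of_sInf_le_of_lt_sInf_succ {y : ℕ} (h₁ : sInf {x | f x = i} ≤ y)
    (h₂ : y < sInf {x | f x = i + 1}) : f y = i := by
  have hfirst : f (sInf {x | f x = i}) = i := Nat.sInf_mem hi
  have hnext : f (sInf {x | f x = i + 1}) = i + 1 := Nat.sInf_mem hi'
  have hlow := hf h₁
  have hhigh := hf h₂.le
  have hne : f y ≠ i + 1 := fun h => (Nat.sInf_le h).not_gt h₂
  omega

end FirstHittingTime

theorem sSeat_zero (η : ℕ → ℤ) (k : ℕ) : sSeat η k 0 = 0 :=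
  Nat.eq_zero_of_le_zero (Nat.sInf_le (by simp [xiSeat]))

section Skip

variable {η : ℕ → ℤ} {k : ℕ} (hη : ∀ x, η x = 0 ∨ η x = 1)
  (hfin : ∀ i : ℕ, ∃ x, xiSeat η k x = (i : ℤ))
include hη hfin

theorem sSeat_lt_sSeat_succ (i : ℕ) : sSeat η k i < sSeat η k (i + 1) := by
  have := (xiSeat_monotone hη k).sInf_lt_sInf_succ (hfin i) (by exact_mod_cast hfin (i + 1))
  simpa [sSeat] using this

theorem xiSeat_eq_of_sSeat_le_of_lt {i y : ℕ} (h₁ : sSeat η k i ≤ y) (h₂ : y < sSeat η k (i + 1)) :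
    xiSeat η k y = i :=
  (xiSeat_monotone hη k).eq_of_sInf_le_of_lt_sInf_succ (hfin i) (by exact_mod_cast hfin (i + 1)) h₁
    (by simpa [sSeat] using h₂)

theorem lowSeatEvent_sSeat_succ (i : ℕ) : lowSeatEvent η k (sSeat η k (i + 1)) = 0 := by
  have hlt := sSeat_lt_sSeat_succ hη hfin i
  obtain ⟨t, ht⟩ : ∃ t, sSeat η k (i + 1) = t + 1 := ⟨sSeat η k (i + 1) - 1, by omega⟩
  have hbefore : xiSeat η k t = i := xiSeat_eq_of_sSeat_le_of_lt hη hfin (by omega) (by omega)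
  have hat : xiSeat η k (t + 1) = (i + 1 : ℕ) := ht ▸ Nat.sInf_mem (hfin (i + 1))
  rw [xiSeat_succ, hbefore] at hat
  push_cast at hat
  rw [ht]
  linarith

theorem lowSeatEvent_eq_one_of_lt {i y : ℕ} (h₁ : sSeat η k i < y) (h₂ : y < sSeat η k (i + 1)) :
    lowSeatEvent η k y = 1 := by
  obtain ⟨t, rfl⟩ : ∃ t, y = t + 1 := ⟨y - 1, by omega⟩
  have hbefore : xiSeat η k t = i := xiSeat_eq_of_sSeat_le_of_lt hη hfin (by omega) (by omega)
  have hat : xiSeat η k (t + 1) = i := xiSeat_eq_of_sSeat_le_of_lt hη hfin (by omega) h₂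
  rw [xiSeat_succ, hbefore] at hat
  linarith

theorem seatW_add_eq_of_sSeat_le_of_lt {i y j : ℕ} (h₁ : sSeat η k i ≤ y)
    (h₂ : y < sSeat η k (i + 1)) (hj : 1 ≤ j) :
    seatW η y (k + j) = seatW η (sSeat η k i) (k + j) := by
  induction y, h₁ using Nat.le_induction with
  | base => rfl
  | succ y hy ih =>
    rw [seatW_add_of_lowSeatEvent_eq_one (hη _)
      (lowSeatEvent_eq_one_of_lt hη hfin (by omega) h₂) hj, ih (by omega)]

theorem seatEvents_skip_succ_of_seatW {x j : ℕ}
    (hW : ∀ i, 1 ≤ i → seatW (skip η k) x i = seatW η (sSeat η k x) (k + i)) (hj : 1 ≤ j) :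
    seatUp (skip η k) j (x + 1) = seatUp η (k + j) (sSeat η k (x + 1)) ∧
      seatDown (skip η k) j (x + 1) = seatDown η (k + j) (sSeat η k (x + 1)) := by
  set u := sSeat η k (x + 1)
  have hlt : sSeat η k x < u := sSeat_lt_sSeat_succ hη hfin x
  have hE : lowSeatEvent η k u = 0 := lowSeatEvent_sSeat_succ hη hfin x
  have hW' : ∀ i, 1 ≤ i → seatW (skip η k) x i = seatW η (u - 1) (k + i) := fun i hi =>
    (hW i hi).trans (seatW_add_eq_of_sSeat_le_of_lt hη hfin (by omega) (by omega) hi).symm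
  have hskip : skip η k (x + 1) = η u := rfl
  constructor
  · rw [seatUp_add_of_lowSeatEvent_eq_zero (hη u) hE hj, seatUp, Nat.add_sub_cancel, hskip,
      hW' j hj, prod_congr rfl fun i hi => hW' i (mem_Ico.1 hi).1]
  · rw [seatDown_add_of_lowSeatEvent_eq_zero (hη u) hE hj, seatDown, Nat.add_sub_cancel, hskip,
      hW' j hj, prod_congr rfl fun i hi => by rw [hW' i (mem_Ico.1 hi).1]]

theorem seatW_skip (x : ℕ) {j : ℕ} (hj : 1 ≤ j) :
    seatW (skip η k) x j = seatW η (sSeat η k x) (k + j) := by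
  induction x generalizing j with
  | zero => simp [sSeat_zero, seatW]
  | succ x ih =>
    obtain ⟨hup, hdown⟩ := seatEvents_skip_succ_of_seatW hη hfin (fun i hi => ih hi) hj
    have hlt := sSeat_lt_sSeat_succ hη hfin x
    obtain ⟨t, ht⟩ : ∃ t, sSeat η k (x + 1) = t + 1 := ⟨sSeat η k (x + 1) - 1, by omega⟩
    rw [ht] at hup hdown ⊢
    rw [seatW_succ, seatW_succ, hup, hdown, ih hj,
      seatW_add_eq_of_sSeat_le_of_lt hη hfin (i := x) (y := t) (by omega) (by omega) hj]

theorem seatEvents_skip_succ (x : ℕ) {j : ℕ} (hj : 1 ≤ j) :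
    seatUp (skip η k) j (x + 1) = seatUp η (k + j) (sSeat η k (x + 1)) ∧
      seatDown (skip η k) j (x + 1) = seatDown η (k + j) (sSeat η k (x + 1)) :=
  seatEvents_skip_succ_of_seatW hη hfin (fun _ hi => seatW_skip hη hfin x hi) hj

theorem recordInd_skip_succ (x : ℕ) :
    recordInd (skip η k) (x + 1) = recordInd η (sSeat η k (x + 1)) := by
  set u := sSeat η k (x + 1)
  have hu : 1 ≤ u := by have := sSeat_lt_sSeat_succ hη hfin x; omega
  have hE : lowSeatEvent η k u = 0 := lowSeatEvent_sSeat_succ hη hfin x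
  rw [recordInd_eq_one_sub_lowSeatEvent _ (Nat.le_add_left 1 x) (Nat.le_add_right (x + 1) u),
    recordInd_eq_one_sub_lowSeatEvent η hu (by omega : u ≤ k + (x + 1 + u)), lowSeatEvent_add η k,
    hE, zero_add, lowSeatEvent]
  congr 1
  refine sum_congr rfl fun m hm => ?_
  obtain ⟨hup, hdown⟩ := seatEvents_skip_succ hη hfin x (mem_Icc.1 hm).1
  rw [hup, hdown]

end Skip

theorem skip_shifts_seats_general (η : ℕ → ℤ) (hη : ∀ x, η x = 0 ∨ η x = 1)
    (k ℓ : ℕ) (hℓ : 1 ≤ ℓ)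
    (hfin : ∀ i : ℕ, ∃ x, xiSeat η k x = (i : ℤ))
    (x : ℕ) (hx : 1 ≤ x) :
    seatUp (skip η k) ℓ x = seatUp η (k + ℓ) (sSeat η k x) ∧
    seatDown (skip η k) ℓ x = seatDown η (k + ℓ) (sSeat η k x) ∧
    recordInd (skip η k) x = recordInd η (sSeat η k x) := by
  obtain ⟨x, rfl⟩ : ∃ t, x = t + 1 := ⟨x - 1, by omega⟩
  exact ⟨(seatEvents_skip_succ hη hfin x hℓ).1, (seatEvents_skip_succ hη hfin x hℓ).2,
    recordInd_skip_succ hη hfin x⟩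

/-- the k-skip map shifts the seat numbers (Proposition seat_semig). -/
theorem skip_shifts_seats (η : ℕ → ℤ) (hη : ∀ x, η x = 0 ∨ η x = 1)
    (k ℓ : ℕ) (hk : 1 ≤ k) (hℓ : 1 ≤ ℓ)
    (hfin : ∀ i : ℕ, ∃ x, xiSeat η k x = (i : ℤ))
    (x : ℕ) (hx : 1 ≤ x) :
    seatUp (skip η k) ℓ x = seatUp η (k + ℓ) (sSeat η k x) ∧
    seatDown (skip η k) ℓ x = seatDown η (k + ℓ) (sSeat η k x) ∧
    recordInd (skip η k) x = recordInd η (sSeat η k x) :=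
  skip_shifts_seats_general η hη k ℓ hℓ hfin x hx
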